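/- Let ω ∈ ℕ, let P be a finite set of points of the grid {0,…,2^ω−1}², and let A_P be a list of the points of P sorted in increasing order of morton_ω. Then for every dyadic cell C of the grid, the set of indices { i : A_P[i] ∈ C } is a contiguous range of indices; i.e. the points of P lying in any quadtree cell occupy a contiguous subarray of the Morton-sorted array. -/

import Mathlib

/-!
Dropping the `2k` lowest bits of a Morton code gives the Morton code of the level-`k` cell
containing the point: `morton (k + m) x y / 4 ^ k = morton m (x / 2 ^ k) (y / 2 ^ k)`.
Since Morton codes are injective on the grid, a point lies in the cell `C` iff its code
divided by `4 ^ k` equals the code of `C`. Along the sorted array this quotient is monotone,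
so its fibres are intervals of indices.
-/

/-- The Morton (Z-order) encoding of a pair of `ω`-bit numbers, obtained by
interleaving binary digits: `morton ω x y = Σ_{i<ω} (bitᵢ(x)·2^{2i+1} + bitᵢ(y)·2^{2i})`. -/
def morton (ω : ℕ) (x y : ℕ) : ℕ :=
  ∑ i ∈ Finset.range ω,
    ((Nat.testBit x i).toNat * 2 ^ (2 * i + 1) + (Nat.testBit y i).toNat * 2 ^ (2 * i))

theorem morton_lt_four_pow (ω x y : ℕ) : morton ω x y < 4 ^ ω := by
  induction ω with
  | zero => simp [morton]
  | succ n ih =>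
    rw [morton, Finset.sum_range_succ, ← morton, pow_succ, pow_succ, pow_mul]
    have hx := Bool.toNat_le (x.testBit n)
    have hy := Bool.toNat_le (y.testBit n)
    norm_num only
    nlinarith

theorem morton_add (k m x y : ℕ) :
    morton (k + m) x y
      = morton k (x % 2 ^ k) (y % 2 ^ k) + 4 ^ k * morton m (x / 2 ^ k) (y / 2 ^ k) := by
  rw [morton, Finset.sum_range_add, morton, morton, Finset.mul_sum]
  congr 1
  · refine Finset.sum_congr rfl fun i hi => ?_
    simp [Nat.testBit_mod_two_pow, Finset.mem_range.mp hi]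
  · refine Finset.sum_congr rfl fun i _ => ?_
    rw [Nat.testBit_div_two_pow, Nat.testBit_div_two_pow, add_comm i k,
      show (4 : ℕ) ^ k = 2 ^ (2 * k) by rw [pow_mul]; norm_num]
    ring

theorem morton_add_div_four_pow (k m x y : ℕ) :
    morton (k + m) x y / 4 ^ k = morton m (x / 2 ^ k) (y / 2 ^ k) := by
  rw [morton_add, add_comm, Nat.mul_add_div (by positivity),
    Nat.div_eq_of_lt (morton_lt_four_pow k _ _), add_zero]

theorem morton_one (x y : ℕ) : morton 1 x y = 2 * (x % 2) + y % 2 := by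
  have bit_zero (n : ℕ) : (n.testBit 0).toNat = n % 2 := by
    rcases n.mod_two_eq_zero_or_one with h | h <;> simp [Nat.testBit_zero, h]
  simp only [morton, Finset.sum_range_one, bit_zero]
  ring

theorem morton_eq_morton_iff {ω x y x' y' : ℕ} (hx : x < 2 ^ ω) (hy : y < 2 ^ ω)
    (hx' : x' < 2 ^ ω) (hy' : y' < 2 ^ ω) :
    morton ω x y = morton ω x' y' ↔ x = x' ∧ y = y' := by
  refine ⟨fun h => ?_, fun ⟨rfl, rfl⟩ => rfl⟩
  induction ω generalizing x y x' y' with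
  | zero => simp_all
  | succ m ih =>
    rw [add_comm m 1] at h
    rw [morton_add, morton_add, morton_one, morton_one, pow_one] at h
    rw [pow_succ] at hx hy hx' hy'
    obtain ⟨hx2, hy2⟩ := ih (x := x / 2) (y := y / 2) (x' := x' / 2) (y' := y' / 2)
      (by omega) (by omega) (by omega) (by omega) (by omega)
    omega

theorem Nat.le_and_lt_add_iff_div_eq {n a x : ℕ} (hn : 0 < n) (ha : n ∣ a) :
    a ≤ x ∧ x < a + n ↔ x / n = a / n := by
  obtain ⟨c, rfl⟩ := ha
  rw [Nat.mul_div_cancel_left c hn, Nat.div_eq_iff hn, mul_comm c n]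
  omega

theorem Nat.exists_eq_Ico_of_ordConnected {S : Set ℕ} (hS : S.OrdConnected)
    (hbdd : BddAbove S) :
    ∃ l u, S = Set.Ico l u := by
  rcases S.eq_empty_or_nonempty with rfl | hne
  · exact ⟨0, 0, Set.Ico_self 0 |>.symm⟩
  refine ⟨sInf S, sSup S + 1, Set.ext fun j => ⟨fun hj => ?_, fun ⟨h1, h2⟩ => ?_⟩⟩
  · exact ⟨Nat.sInf_le hj, Nat.lt_succ_of_le (le_csSup hbdd hj)⟩
  · exact hS.out (Nat.sInf_mem hne) (Nat.sSup_mem hne hbdd) ⟨h1, Nat.lt_succ_iff.mp h2⟩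

theorem List.Pairwise.ordConnected_setOf_get_eq {α β : Type*} [PartialOrder β] {g : α → β}
    {A : List α} (hA : A.Pairwise fun p q => g p ≤ g q) (v : β) :
    {i : ℕ | ∃ h : i < A.length, g (A.get ⟨i, h⟩) = v}.OrdConnected := by
  have mono : ∀ {i j : Fin A.length}, i ≤ j → g (A.get i) ≤ g (A.get j) := fun hij =>
    hij.eq_or_lt.elim (fun h => h ▸ le_rfl) hA.rel_get_of_lt
  refine ⟨fun i ⟨hi, hgi⟩ m ⟨hm, hgm⟩ j ⟨hij, hjm⟩ => ?_⟩
  have hj : j < A.length := hjm.trans_lt hm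
  exact ⟨hj, le_antisymm (hgm ▸ mono (i := ⟨j, hj⟩) (j := ⟨m, hm⟩) hjm)
    (hgi ▸ mono (i := ⟨i, hi⟩) (j := ⟨j, hj⟩) hij)⟩

theorem mem_cell_iff_morton_div_four_pow_eq {ω k a b x y : ℕ} (hk : k ≤ ω)
    (ha : a < 2 ^ ω) (hb : b < 2 ^ ω) (hda : 2 ^ k ∣ a) (hdb : 2 ^ k ∣ b)
    (hx : x < 2 ^ ω) (hy : y < 2 ^ ω) :
    (a ≤ x ∧ x < a + 2 ^ k ∧ b ≤ y ∧ y < b + 2 ^ k) ↔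
      morton ω x y / 4 ^ k = morton (ω - k) (a / 2 ^ k) (b / 2 ^ k) := by
  obtain ⟨m, rfl⟩ := Nat.exists_eq_add_of_le hk
  have div_lt (z : ℕ) (hz : z < 2 ^ (k + m)) : z / 2 ^ k < 2 ^ m := by
    rwa [Nat.div_lt_iff_lt_mul (by positivity), ← pow_add, add_comm]
  rw [Nat.add_sub_cancel_left, morton_add_div_four_pow,
    morton_eq_morton_iff (div_lt x hx) (div_lt y hy) (div_lt a ha) (div_lt b hb),
    ← Nat.le_and_lt_add_iff_div_eq (by positivity) hda,
    ← Nat.le_and_lt_add_iff_div_eq (by positivity) hdb, and_assoc]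

theorem morton_sorted_cell_contiguous_general (ω k : ℕ) (hk : k ≤ ω) (P : Finset (ℕ × ℕ))
    (hP : ∀ p ∈ P, p.1 < 2 ^ ω ∧ p.2 < 2 ^ ω)
    (A : List (ℕ × ℕ)) (hmem : ∀ p, p ∈ A ↔ p ∈ P)
    (hsorted : A.Pairwise fun p p' => morton ω p.1 p.2 ≤ morton ω p'.1 p'.2)
    (a b : ℕ) (ha : a < 2 ^ ω) (hb : b < 2 ^ ω) (hda : 2 ^ k ∣ a) (hdb : 2 ^ k ∣ b) :
    ∃ l u : ℕ,
      {i : ℕ | ∃ h : i < A.length,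
        a ≤ (A.get ⟨i, h⟩).1 ∧ (A.get ⟨i, h⟩).1 < a + 2 ^ k ∧
        b ≤ (A.get ⟨i, h⟩).2 ∧ (A.get ⟨i, h⟩).2 < b + 2 ^ k} = Set.Ico l u := by
  set cellCode : ℕ × ℕ → ℕ := fun p => morton ω p.1 p.2 / 4 ^ k
  have hcell : ∀ p ∈ A, (a ≤ p.1 ∧ p.1 < a + 2 ^ k ∧ b ≤ p.2 ∧ p.2 < b + 2 ^ k) ↔
      cellCode p = morton (ω - k) (a / 2 ^ k) (b / 2 ^ k) := fun p hp =>
    have hp := hP p ((hmem p).1 hp)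
    mem_cell_iff_morton_div_four_pow_eq hk ha hb hda hdb hp.1 hp.2
  have hsorted' : A.Pairwise fun p p' => cellCode p ≤ cellCode p' :=
    hsorted.imp (Nat.div_le_div_right ·)
  simp_rw [fun i h => hcell (A.get ⟨i, h⟩) (A.get_mem _)]
  exact Nat.exists_eq_Ico_of_ordConnected (hsorted'.ordConnected_setOf_get_eq _)
    ⟨A.length, fun _ ⟨h, _⟩ => h.le⟩

/-- Let `P` be a finite set of points of the grid `{0,…,2^ω−1}²` and let `A` be a
list of the points of `P` sorted in increasing order of `morton ω`.  Then for every
level-`k` dyadic cell `{a,…,a+2^k−1} × {b,…,b+2^k−1}` of the grid (`k ≤ ω`,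
`a, b < 2^ω` divisible by `2^k`), the set of indices `i` with `A[i]` in the cell is
a contiguous range of indices: the points of `P` lying in any quadtree cell occupy a
contiguous subarray of the Morton-sorted array. -/
theorem morton_sorted_cell_contiguous (ω k : ℕ) (hk : k ≤ ω) (P : Finset (ℕ × ℕ))
    (hP : ∀ p ∈ P, p.1 < 2 ^ ω ∧ p.2 < 2 ^ ω)
    (A : List (ℕ × ℕ)) (hnodup : A.Nodup) (hmem : ∀ p, p ∈ A ↔ p ∈ P)
    (hsorted : A.Pairwise fun p p' => morton ω p.1 p.2 ≤ morton ω p'.1 p'.2)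
    (a b : ℕ) (ha : a < 2 ^ ω) (hb : b < 2 ^ ω) (hda : 2 ^ k ∣ a) (hdb : 2 ^ k ∣ b) :
    ∃ l u : ℕ,
      {i : ℕ | ∃ h : i < A.length,
        a ≤ (A.get ⟨i, h⟩).1 ∧ (A.get ⟨i, h⟩).1 < a + 2 ^ k ∧
        b ≤ (A.get ⟨i, h⟩).2 ∧ (A.get ⟨i, h⟩).2 < b + 2 ^ k} = Set.Ico l u :=
  morton_sorted_cell_contiguous_general ω k hk P hP A hmem hsorted a b ha hb hda hdb
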